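/- Let p ∈ ℝᵈ be a nonzero vector and let the quantizer Q̂ (consisting of adaptive normalization to [0,1] by the range of p, dithered uniform quantization with L levels scaled by 1/τ where τ = 1 + d/L², and de-normalization) be applied entrywise. Then E[‖Q̂(p) − p‖²] ≤ (1 − 1/τ)‖p‖², and Q̂(0) = 0. -/

import Mathlib

open MeasureTheory

/-- The dithered scalar quantizer with `L` levels and dither `u`. -/
noncomputable def zetaQ (L : ℕ) (x u : ℝ) : ℝ := (⌊x * L + u⌋ : ℝ) / L

/-- The full quantizer `Q̂` (adaptive normalization by the range, dithered uniform
quantization with `L` levels scaled by `1/τ`, and de-normalization), applied entrywise. -/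
noncomputable def Qhat (d L : ℕ) (τ m r : ℝ) (p : Fin d → ℝ) (u : Fin d → ℝ) :
    Fin d → ℝ :=
  fun i => (1 / τ) * (r * zetaQ L ((p i - m) / r) (u i) + m)

/-!
Each coordinate is quantized independently, so the expected error splits into a sum over
coordinates. A uniform dither rounds `y = x L` down to `⌊y⌋` with probability `1 - fract y`
and up with probability `fract y`, so the quantized value is unbiased with variance at most
`1 / (4 L²)`. For the coordinate `a = r x + m` the error of `c (r ζ + m)` is therefore
`(1 - c)² a²` (bias from the shrinkage `c = 1/τ`) plus at most `c² r² / (4 L²)`. Summing and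
using `r² ≤ 4 ‖p‖²` and `d / L² = τ - 1`, the total is at most
`((1 - c)² + (τ - 1) c²) ‖p‖² = (1 - 1/τ) ‖p‖²`.
-/

open Set

section FloorDither

variable (f : ℤ → ℝ) (y : ℝ)

lemma floor_add_eqOn_Ioo :
    EqOn (fun u => f ⌊y + u⌋) (fun _ => f ⌊y⌋) (Ioo 0 (1 - Int.fract y)) := by
  intro u ⟨hu0, hu1⟩
  have hy := Int.floor_add_fract y
  have := Int.fract_nonneg y
  have : ⌊y + u⌋ = ⌊y⌋ := by
    rw [Int.floor_eq_iff]
    constructor <;> linarith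
  simp only [this]

lemma floor_add_eqOn_Ico :
    EqOn (fun u => f ⌊y + u⌋) (fun _ => f (⌊y⌋ + 1)) (Ico (1 - Int.fract y) 1) := by
  intro u ⟨hu0, hu1⟩
  have hy := Int.floor_add_fract y
  have := Int.fract_lt_one y
  have : ⌊y + u⌋ = ⌊y⌋ + 1 := by
    rw [Int.floor_eq_iff]
    push_cast
    constructor <;> linarith
  simp only [this]

lemma Ioo_zero_one_eq_union_fract :
    Ioo (0 : ℝ) 1 = Ioo 0 (1 - Int.fract y) ∪ Ico (1 - Int.fract y) 1 :=
  (Ioo_union_Ico_eq_Ioo (by linarith [Int.fract_lt_one y])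
    (by linarith [Int.fract_nonneg y])).symm

lemma integrableOn_Ioo_floor_add : IntegrableOn (fun u => f ⌊y + u⌋) (Ioo 0 1) := by
  rw [Ioo_zero_one_eq_union_fract y]
  exact ((integrableOn_const measure_Ioo_lt_top.ne).congr_fun
      (floor_add_eqOn_Ioo f y).symm measurableSet_Ioo).union
    ((integrableOn_const measure_Ico_lt_top.ne).congr_fun
      (floor_add_eqOn_Ico f y).symm measurableSet_Ico)

lemma setIntegral_Ioo_floor_add :
    ∫ u in Ioo 0 1, f ⌊y + u⌋ = (1 - Int.fract y) * f ⌊y⌋ + Int.fract y * f (⌊y⌋ + 1) := by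
  have hsplit := Ioo_zero_one_eq_union_fract y
  have hint := integrableOn_Ioo_floor_add f y
  rw [hsplit] at hint
  rw [hsplit, setIntegral_union (Set.disjoint_left.mpr fun u hu hu' => hu'.1.not_gt hu.2)
      measurableSet_Ico hint.left_of_union hint.right_of_union,
    setIntegral_congr_fun measurableSet_Ioo (floor_add_eqOn_Ioo f y),
    setIntegral_congr_fun measurableSet_Ico (floor_add_eqOn_Ico f y),
    setIntegral_const, setIntegral_const,
    Real.volume_real_Ioo_of_le (by linarith [Int.fract_lt_one y]),
    Real.volume_real_Ico_of_le (by linarith [Int.fract_nonneg y])]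
  simp only [smul_eq_mul]
  ring

end FloorDither

lemma two_point_sq_affine_le (α β n t : ℝ) :
    (1 - t) * (α * n + β) ^ 2 + t * (α * (n + 1) + β) ^ 2 ≤ (α * (n + t) + β) ^ 2 + α ^ 2 / 4 := by
  have hvar : (1 - t) * (α * n + β) ^ 2 + t * (α * (n + 1) + β) ^ 2
      = (α * (n + t) + β) ^ 2 + α ^ 2 * (t * (1 - t)) := by ring
  rw [hvar]
  nlinarith [mul_nonneg (sq_nonneg α) (sq_nonneg (2 * t - 1))]

lemma integrableOn_sq_affine_zetaQ (L : ℕ) (c r m a x : ℝ) :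
    IntegrableOn (fun u => (c * (r * zetaQ L x u + m) - a) ^ 2) (Ioo 0 1) :=
  integrableOn_Ioo_floor_add (fun k => (c * (r * ((k : ℝ) / L) + m) - a) ^ 2) (x * L)

lemma setIntegral_sq_affine_zetaQ_le {L : ℕ} (hL : 0 < L) (c : ℝ) {r m a x : ℝ}
    (hx : r * x + m = a) :
    ∫ u in Ioo 0 1, (c * (r * zetaQ L x u + m) - a) ^ 2
      ≤ (1 - c) ^ 2 * a ^ 2 + c ^ 2 * r ^ 2 / (4 * L ^ 2) := by
  have hL0 : (L : ℝ) ≠ 0 := by positivity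
  have hquad : ∀ k : ℝ, (c * (r * (k / L) + m) - a) ^ 2 = (c * r / L * k + (c * m - a)) ^ 2 := by
    intro k; ring
  have hmean : c * r / L * (⌊x * L⌋ + Int.fract (x * L)) + (c * m - a) = -((1 - c) * a) := by
    rw [Int.floor_add_fract, ← hx]; field_simp; ring
  calc ∫ u in Ioo 0 1, (c * (r * zetaQ L x u + m) - a) ^ 2
      = (1 - Int.fract (x * L)) * (c * r / L * ⌊x * L⌋ + (c * m - a)) ^ 2
          + Int.fract (x * L) * (c * r / L * (⌊x * L⌋ + 1) + (c * m - a)) ^ 2 := by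
        simp only [zetaQ]
        rw [setIntegral_Ioo_floor_add (fun k => (c * (r * ((k : ℝ) / L) + m) - a) ^ 2),
          hquad, hquad]
        push_cast; rfl
    _ ≤ (c * r / L * (⌊x * L⌋ + Int.fract (x * L)) + (c * m - a)) ^ 2 + (c * r / L) ^ 2 / 4 :=
        two_point_sq_affine_le _ _ _ _
    _ = (1 - c) ^ 2 * a ^ 2 + c ^ 2 * r ^ 2 / (4 * L ^ 2) := by
        rw [hmean]; field_simp

lemma setIntegral_univ_pi_sum {ι : Type*} [Fintype ι] {X : ι → Type*}
    [∀ i, MeasurableSpace (X i)] (μ : ∀ i, Measure (X i)) [∀ i, SigmaFinite (μ i)]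
    {s : ∀ i, Set (X i)} (hs : ∀ i, μ i (s i) = 1) {g : ∀ i, X i → ℝ}
    (hg : ∀ i, IntegrableOn (g i) (s i) (μ i)) :
    ∫ x in univ.pi s, ∑ i, g i (x i) ∂Measure.pi μ = ∑ i, ∫ x in s i, g i x ∂μ i := by
  have : ∀ i, IsProbabilityMeasure ((μ i).restrict (s i)) := fun i => ⟨by simp [hs i]⟩
  rw [Measure.restrict_pi_pi, integral_finsetSum _ fun i _ => integrable_comp_eval (hg i)]
  exact Finset.sum_congr rfl fun i _ => integral_comp_eval (hg i).aestronglyMeasurable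

lemma range_mul_div_range_add {m M a : ℝ} (hm : m ≤ a) (hM : a ≤ M) :
    (M - m) * ((a - m) / (M - m)) + m = a := by
  rcases eq_or_ne (M - m) 0 with h | h
  · rw [h]; linarith
  · rw [mul_div_cancel₀ _ h]; ring

lemma sq_sub_le_four_mul_sum_sq {ι : Type*} [Fintype ι] {p : ι → ℝ} {m M : ℝ}
    (hm : m ∈ range p) (hM : M ∈ range p) : (M - m) ^ 2 ≤ 4 * ∑ i, p i ^ 2 := by
  obtain ⟨j, rfl⟩ := hM
  obtain ⟨k, rfl⟩ := hm
  have hj := Finset.single_le_sum (f := fun i => p i ^ 2) (fun i _ => sq_nonneg _)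
    (Finset.mem_univ j)
  have hk := Finset.single_le_sum (f := fun i => p i ^ 2) (fun i _ => sq_nonneg _)
    (Finset.mem_univ k)
  nlinarith [sq_nonneg (p j + p k)]

lemma sq_bias_add_variance_le {d L τ r S : ℝ} (hd : 0 ≤ d) (hL : 0 < L)
    (hτ : τ = 1 + d / L ^ 2) (hr : r ^ 2 ≤ 4 * S) :
    (1 - 1 / τ) ^ 2 * S + d * ((1 / τ) ^ 2 * r ^ 2 / (4 * L ^ 2)) ≤ (1 - 1 / τ) * S := by
  have hτ0 : 0 < τ := by rw [hτ]; positivity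
  have hτ1 : 0 ≤ τ - 1 := by rw [hτ]; simp only [add_sub_cancel_left]; positivity
  have hvar : d * ((1 / τ) ^ 2 * r ^ 2 / (4 * L ^ 2)) = (τ - 1) * ((1 / τ) ^ 2 * (r ^ 2 / 4)) := by
    rw [hτ]; field_simp; ring
  have hcoef : (1 - 1 / τ) ^ 2 * S + (τ - 1) * ((1 / τ) ^ 2 * S) = (1 - 1 / τ) * S := by
    field_simp; ring
  calc (1 - 1 / τ) ^ 2 * S + d * ((1 / τ) ^ 2 * r ^ 2 / (4 * L ^ 2))
      = (1 - 1 / τ) ^ 2 * S + (τ - 1) * ((1 / τ) ^ 2 * (r ^ 2 / 4)) := by rw [hvar]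
    _ ≤ (1 - 1 / τ) ^ 2 * S + (τ - 1) * ((1 / τ) ^ 2 * S) := by gcongr; linarith
    _ = (1 - 1 / τ) * S := hcoef

theorem qhat_compression_bound_general (d L : ℕ) (hL : 0 < L)
    (p : Fin d → ℝ) (τ m M r : ℝ)
    (hτ : τ = 1 + (d : ℝ) / (L : ℝ) ^ 2)
    (hm : IsLeast (Set.range p) m) (hM : IsGreatest (Set.range p) M)
    (hr : r = M - m) :
    (∫ u in Set.univ.pi (fun _ : Fin d => Set.Ioo (0 : ℝ) 1),
        ∑ i, (Qhat d L τ m r p u i - p i) ^ 2) ≤ (1 - 1 / τ) * ∑ i, (p i) ^ 2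
      ∧ ∀ u : Fin d → ℝ, Qhat d L τ 0 0 (0 : Fin d → ℝ) u = 0 := by
  refine ⟨?_, fun u => funext fun i => by simp [Qhat]⟩
  have hcoord : ∀ i, r * ((p i - m) / r) + m = p i := fun i =>
    hr ▸ range_mul_div_range_add (hm.2 ⟨i, rfl⟩) (hM.2 ⟨i, rfl⟩)
  calc (∫ u in univ.pi (fun _ : Fin d => Ioo (0 : ℝ) 1), ∑ i, (Qhat d L τ m r p u i - p i) ^ 2)
      = ∑ i, ∫ u in Ioo 0 1, (1 / τ * (r * zetaQ L ((p i - m) / r) u + m) - p i) ^ 2 :=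
        setIntegral_univ_pi_sum (fun _ => volume) (fun _ => by simp)
          fun i => integrableOn_sq_affine_zetaQ L _ _ _ _ _
    _ ≤ ∑ i, ((1 - 1 / τ) ^ 2 * p i ^ 2 + (1 / τ) ^ 2 * r ^ 2 / (4 * L ^ 2)) :=
        Finset.sum_le_sum fun i _ => setIntegral_sq_affine_zetaQ_le hL _ (hcoord i)
    _ = (1 - 1 / τ) ^ 2 * ∑ i, p i ^ 2 + d * ((1 / τ) ^ 2 * r ^ 2 / (4 * L ^ 2)) := by
        simp only [Finset.sum_add_distrib, Finset.mul_sum, Finset.sum_const, Finset.card_univ,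
          Fintype.card_fin, nsmul_eq_mul]
    _ ≤ (1 - 1 / τ) * ∑ i, p i ^ 2 :=
        sq_bias_add_variance_le (Nat.cast_nonneg d) (Nat.cast_pos.mpr hL) hτ
          (hr ▸ sq_sub_le_four_mul_sum_sq hm.1 hM.1)

/-- Compression error bound of the quantizer: `E[‖Q̂(p) − p‖²] ≤ (1 − 1/τ)‖p‖²`
with `τ = 1 + d/L²`, and `Q̂(0) = 0`. The expectation is over the i.i.d. uniform
dithers `u ∈ [0,1]^d`. -/
theorem qhat_compression_bound (d L : ℕ) (hd : 0 < d) (hL : 0 < L)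
    (p : Fin d → ℝ) (hp : p ≠ 0) (τ m M r : ℝ)
    (hτ : τ = 1 + (d : ℝ) / (L : ℝ) ^ 2)
    (hm : IsLeast (Set.range p) m) (hM : IsGreatest (Set.range p) M)
    (hr : r = M - m) :
    (∫ u in Set.univ.pi (fun _ : Fin d => Set.Ioo (0 : ℝ) 1),
        ∑ i, (Qhat d L τ m r p u i - p i) ^ 2) ≤ (1 - 1 / τ) * ∑ i, (p i) ^ 2
      ∧ ∀ u : Fin d → ℝ, Qhat d L τ 0 0 (0 : Fin d → ℝ) u = 0 :=
  qhat_compression_bound_general d L hL p τ m M r hτ hm hM hr
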